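/- arXiv:1312.3297 — 2 statements merged into one kernel-verified Lean document; each statement's English description precedes it below -/
import Mathlib

section
/- For the D2Q9 scheme with the orthogonal moment basis, the shifting matrix T(ũ) = M(ũ)M(0)⁻¹ is lower block-triangular with identity blocks on the diagonal, where the blocks correspond to the grouping of moments by polynomial degree (1,2,3,2,1); in particular det T(ũ) = 1 for all ũ ∈ ℝ². -/
noncomputable section

open Matrix

/-- The nine velocities of the D2Q9 scheme with velocity scale `l`. -/
def d2q9V (l : ℝ) : Fin 9 → ℝ × ℝ :=
  ![(0, 0), (l, 0), (0, l), (-l, 0), (0, -l), (l, l), (-l, l), (-l, -l), (l, -l)]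

/-- The orthogonal moment polynomials (7) of the D2Q9 scheme, as functions on `ℝ × ℝ`. -/
def d2q9P (l : ℝ) : Fin 9 → ℝ × ℝ → ℝ :=
  ![fun _ => 1,
    fun p => p.1,
    fun p => p.2,
    fun p => (3 * (p.1 ^ 2 + p.2 ^ 2) - 4 * l ^ 2) / l ^ 2,
    fun p => (p.1 ^ 2 - p.2 ^ 2) / l ^ 2,
    fun p => p.1 * p.2 / l ^ 2,
    fun p => p.1 * (3 * (p.1 ^ 2 + p.2 ^ 2) - 5 * l ^ 2) / l ^ 3,
    fun p => p.2 * (3 * (p.1 ^ 2 + p.2 ^ 2) - 5 * l ^ 2) / l ^ 3,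
    fun p => ((9 / 2) * (p.1 ^ 2 + p.2 ^ 2) ^ 2 - (21 * l ^ 2 / 2) * (p.1 ^ 2 + p.2 ^ 2)
        + 4 * l ^ 4) / l ^ 4]

/-- The shifted moment matrix `M(ũ)` with entries `M(ũ)_{kj} = P_k (v_j - ũ)`. -/
def d2q9M (l : ℝ) (u : ℝ × ℝ) : Matrix (Fin 9) (Fin 9) ℝ :=
  Matrix.of fun k j => d2q9P l k (d2q9V l j - u)

/-- The shifting matrix `T(ũ) = M(ũ) M(0)⁻¹`. -/
def d2q9T (l : ℝ) (u : ℝ × ℝ) : Matrix (Fin 9) (Fin 9) ℝ :=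
  d2q9M l u * (d2q9M l 0)⁻¹

/-- Degrees of the orthogonal D2Q9 moment polynomials, giving the block grouping
`{0}, {1,2}, {3,4,5}, {6,7}, {8}` of sizes (1,2,3,2,1). -/
def d2q9deg : Fin 9 → ℕ := ![0, 1, 1, 2, 2, 2, 3, 3, 4]

-- auxiliary evaluation lemmas for `vecCons` at numeral indices

@[simp] private lemma d2q9cv9_1 {α : Type*} (x : α) (u : Fin 8 → α) : Matrix.vecCons x u (1 : Fin 9) = u 0 := rfl
@[simp] private lemma d2q9cv9_2 {α : Type*} (x : α) (u : Fin 8 → α) : Matrix.vecCons x u (2 : Fin 9) = u 1 := rfl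
@[simp] private lemma d2q9cv9_3 {α : Type*} (x : α) (u : Fin 8 → α) : Matrix.vecCons x u (3 : Fin 9) = u 2 := rfl
@[simp] private lemma d2q9cv9_4 {α : Type*} (x : α) (u : Fin 8 → α) : Matrix.vecCons x u (4 : Fin 9) = u 3 := rfl
@[simp] private lemma d2q9cv9_5 {α : Type*} (x : α) (u : Fin 8 → α) : Matrix.vecCons x u (5 : Fin 9) = u 4 := rfl
@[simp] private lemma d2q9cv9_6 {α : Type*} (x : α) (u : Fin 8 → α) : Matrix.vecCons x u (6 : Fin 9) = u 5 := rfl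
@[simp] private lemma d2q9cv9_7 {α : Type*} (x : α) (u : Fin 8 → α) : Matrix.vecCons x u (7 : Fin 9) = u 6 := rfl
@[simp] private lemma d2q9cv9_8 {α : Type*} (x : α) (u : Fin 8 → α) : Matrix.vecCons x u (8 : Fin 9) = u 7 := rfl
@[simp] private lemma d2q9cv8_1 {α : Type*} (x : α) (u : Fin 7 → α) : Matrix.vecCons x u (1 : Fin 8) = u 0 := rfl
@[simp] private lemma d2q9cv8_2 {α : Type*} (x : α) (u : Fin 7 → α) : Matrix.vecCons x u (2 : Fin 8) = u 1 := rfl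
@[simp] private lemma d2q9cv8_3 {α : Type*} (x : α) (u : Fin 7 → α) : Matrix.vecCons x u (3 : Fin 8) = u 2 := rfl
@[simp] private lemma d2q9cv8_4 {α : Type*} (x : α) (u : Fin 7 → α) : Matrix.vecCons x u (4 : Fin 8) = u 3 := rfl
@[simp] private lemma d2q9cv8_5 {α : Type*} (x : α) (u : Fin 7 → α) : Matrix.vecCons x u (5 : Fin 8) = u 4 := rfl
@[simp] private lemma d2q9cv8_6 {α : Type*} (x : α) (u : Fin 7 → α) : Matrix.vecCons x u (6 : Fin 8) = u 5 := rfl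
@[simp] private lemma d2q9cv8_7 {α : Type*} (x : α) (u : Fin 7 → α) : Matrix.vecCons x u (7 : Fin 8) = u 6 := rfl
@[simp] private lemma d2q9cv7_1 {α : Type*} (x : α) (u : Fin 6 → α) : Matrix.vecCons x u (1 : Fin 7) = u 0 := rfl
@[simp] private lemma d2q9cv7_2 {α : Type*} (x : α) (u : Fin 6 → α) : Matrix.vecCons x u (2 : Fin 7) = u 1 := rfl
@[simp] private lemma d2q9cv7_3 {α : Type*} (x : α) (u : Fin 6 → α) : Matrix.vecCons x u (3 : Fin 7) = u 2 := rfl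
@[simp] private lemma d2q9cv7_4 {α : Type*} (x : α) (u : Fin 6 → α) : Matrix.vecCons x u (4 : Fin 7) = u 3 := rfl
@[simp] private lemma d2q9cv7_5 {α : Type*} (x : α) (u : Fin 6 → α) : Matrix.vecCons x u (5 : Fin 7) = u 4 := rfl
@[simp] private lemma d2q9cv7_6 {α : Type*} (x : α) (u : Fin 6 → α) : Matrix.vecCons x u (6 : Fin 7) = u 5 := rfl
@[simp] private lemma d2q9cv6_1 {α : Type*} (x : α) (u : Fin 5 → α) : Matrix.vecCons x u (1 : Fin 6) = u 0 := rfl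
@[simp] private lemma d2q9cv6_2 {α : Type*} (x : α) (u : Fin 5 → α) : Matrix.vecCons x u (2 : Fin 6) = u 1 := rfl
@[simp] private lemma d2q9cv6_3 {α : Type*} (x : α) (u : Fin 5 → α) : Matrix.vecCons x u (3 : Fin 6) = u 2 := rfl
@[simp] private lemma d2q9cv6_4 {α : Type*} (x : α) (u : Fin 5 → α) : Matrix.vecCons x u (4 : Fin 6) = u 3 := rfl
@[simp] private lemma d2q9cv6_5 {α : Type*} (x : α) (u : Fin 5 → α) : Matrix.vecCons x u (5 : Fin 6) = u 4 := rfl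
@[simp] private lemma d2q9cv5_1 {α : Type*} (x : α) (u : Fin 4 → α) : Matrix.vecCons x u (1 : Fin 5) = u 0 := rfl
@[simp] private lemma d2q9cv5_2 {α : Type*} (x : α) (u : Fin 4 → α) : Matrix.vecCons x u (2 : Fin 5) = u 1 := rfl
@[simp] private lemma d2q9cv5_3 {α : Type*} (x : α) (u : Fin 4 → α) : Matrix.vecCons x u (3 : Fin 5) = u 2 := rfl
@[simp] private lemma d2q9cv5_4 {α : Type*} (x : α) (u : Fin 4 → α) : Matrix.vecCons x u (4 : Fin 5) = u 3 := rfl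
@[simp] private lemma d2q9cv4_1 {α : Type*} (x : α) (u : Fin 3 → α) : Matrix.vecCons x u (1 : Fin 4) = u 0 := rfl
@[simp] private lemma d2q9cv4_2 {α : Type*} (x : α) (u : Fin 3 → α) : Matrix.vecCons x u (2 : Fin 4) = u 1 := rfl
@[simp] private lemma d2q9cv4_3 {α : Type*} (x : α) (u : Fin 3 → α) : Matrix.vecCons x u (3 : Fin 4) = u 2 := rfl
@[simp] private lemma d2q9cv3_1 {α : Type*} (x : α) (u : Fin 2 → α) : Matrix.vecCons x u (1 : Fin 3) = u 0 := rfl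
@[simp] private lemma d2q9cv3_2 {α : Type*} (x : α) (u : Fin 2 → α) : Matrix.vecCons x u (2 : Fin 3) = u 1 := rfl
@[simp] private lemma d2q9cv2_1 {α : Type*} (x : α) (u : Fin 1 → α) : Matrix.vecCons x u (1 : Fin 2) = u 0 := rfl

@[simp] private lemma d2q9cvm9_0 {α : Type*} (x : α) (u : Fin 8 → α) (h : 0 < 9) : Matrix.vecCons x u (⟨0, h⟩ : Fin 9) = x := rfl
@[simp] private lemma d2q9cvm9_1 {α : Type*} (x : α) (u : Fin 8 → α) (h : 1 < 9) : Matrix.vecCons x u (⟨1, h⟩ : Fin 9) = u ⟨0, by omega⟩ := rfl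
@[simp] private lemma d2q9cvm9_2 {α : Type*} (x : α) (u : Fin 8 → α) (h : 2 < 9) : Matrix.vecCons x u (⟨2, h⟩ : Fin 9) = u ⟨1, by omega⟩ := rfl
@[simp] private lemma d2q9cvm9_3 {α : Type*} (x : α) (u : Fin 8 → α) (h : 3 < 9) : Matrix.vecCons x u (⟨3, h⟩ : Fin 9) = u ⟨2, by omega⟩ := rfl
@[simp] private lemma d2q9cvm9_4 {α : Type*} (x : α) (u : Fin 8 → α) (h : 4 < 9) : Matrix.vecCons x u (⟨4, h⟩ : Fin 9) = u ⟨3, by omega⟩ := rfl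
@[simp] private lemma d2q9cvm9_5 {α : Type*} (x : α) (u : Fin 8 → α) (h : 5 < 9) : Matrix.vecCons x u (⟨5, h⟩ : Fin 9) = u ⟨4, by omega⟩ := rfl
@[simp] private lemma d2q9cvm9_6 {α : Type*} (x : α) (u : Fin 8 → α) (h : 6 < 9) : Matrix.vecCons x u (⟨6, h⟩ : Fin 9) = u ⟨5, by omega⟩ := rfl
@[simp] private lemma d2q9cvm9_7 {α : Type*} (x : α) (u : Fin 8 → α) (h : 7 < 9) : Matrix.vecCons x u (⟨7, h⟩ : Fin 9) = u ⟨6, by omega⟩ := rfl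
@[simp] private lemma d2q9cvm9_8 {α : Type*} (x : α) (u : Fin 8 → α) (h : 8 < 9) : Matrix.vecCons x u (⟨8, h⟩ : Fin 9) = u ⟨7, by omega⟩ := rfl
@[simp] private lemma d2q9cvm8_0 {α : Type*} (x : α) (u : Fin 7 → α) (h : 0 < 8) : Matrix.vecCons x u (⟨0, h⟩ : Fin 8) = x := rfl
@[simp] private lemma d2q9cvm8_1 {α : Type*} (x : α) (u : Fin 7 → α) (h : 1 < 8) : Matrix.vecCons x u (⟨1, h⟩ : Fin 8) = u ⟨0, by omega⟩ := rfl
@[simp] private lemma d2q9cvm8_2 {α : Type*} (x : α) (u : Fin 7 → α) (h : 2 < 8) : Matrix.vecCons x u (⟨2, h⟩ : Fin 8) = u ⟨1, by omega⟩ := rfl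
@[simp] private lemma d2q9cvm8_3 {α : Type*} (x : α) (u : Fin 7 → α) (h : 3 < 8) : Matrix.vecCons x u (⟨3, h⟩ : Fin 8) = u ⟨2, by omega⟩ := rfl
@[simp] private lemma d2q9cvm8_4 {α : Type*} (x : α) (u : Fin 7 → α) (h : 4 < 8) : Matrix.vecCons x u (⟨4, h⟩ : Fin 8) = u ⟨3, by omega⟩ := rfl
@[simp] private lemma d2q9cvm8_5 {α : Type*} (x : α) (u : Fin 7 → α) (h : 5 < 8) : Matrix.vecCons x u (⟨5, h⟩ : Fin 8) = u ⟨4, by omega⟩ := rfl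
@[simp] private lemma d2q9cvm8_6 {α : Type*} (x : α) (u : Fin 7 → α) (h : 6 < 8) : Matrix.vecCons x u (⟨6, h⟩ : Fin 8) = u ⟨5, by omega⟩ := rfl
@[simp] private lemma d2q9cvm8_7 {α : Type*} (x : α) (u : Fin 7 → α) (h : 7 < 8) : Matrix.vecCons x u (⟨7, h⟩ : Fin 8) = u ⟨6, by omega⟩ := rfl
@[simp] private lemma d2q9cvm7_0 {α : Type*} (x : α) (u : Fin 6 → α) (h : 0 < 7) : Matrix.vecCons x u (⟨0, h⟩ : Fin 7) = x := rfl
@[simp] private lemma d2q9cvm7_1 {α : Type*} (x : α) (u : Fin 6 → α) (h : 1 < 7) : Matrix.vecCons x u (⟨1, h⟩ : Fin 7) = u ⟨0, by omega⟩ := rfl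
@[simp] private lemma d2q9cvm7_2 {α : Type*} (x : α) (u : Fin 6 → α) (h : 2 < 7) : Matrix.vecCons x u (⟨2, h⟩ : Fin 7) = u ⟨1, by omega⟩ := rfl
@[simp] private lemma d2q9cvm7_3 {α : Type*} (x : α) (u : Fin 6 → α) (h : 3 < 7) : Matrix.vecCons x u (⟨3, h⟩ : Fin 7) = u ⟨2, by omega⟩ := rfl
@[simp] private lemma d2q9cvm7_4 {α : Type*} (x : α) (u : Fin 6 → α) (h : 4 < 7) : Matrix.vecCons x u (⟨4, h⟩ : Fin 7) = u ⟨3, by omega⟩ := rfl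
@[simp] private lemma d2q9cvm7_5 {α : Type*} (x : α) (u : Fin 6 → α) (h : 5 < 7) : Matrix.vecCons x u (⟨5, h⟩ : Fin 7) = u ⟨4, by omega⟩ := rfl
@[simp] private lemma d2q9cvm7_6 {α : Type*} (x : α) (u : Fin 6 → α) (h : 6 < 7) : Matrix.vecCons x u (⟨6, h⟩ : Fin 7) = u ⟨5, by omega⟩ := rfl
@[simp] private lemma d2q9cvm6_0 {α : Type*} (x : α) (u : Fin 5 → α) (h : 0 < 6) : Matrix.vecCons x u (⟨0, h⟩ : Fin 6) = x := rfl
@[simp] private lemma d2q9cvm6_1 {α : Type*} (x : α) (u : Fin 5 → α) (h : 1 < 6) : Matrix.vecCons x u (⟨1, h⟩ : Fin 6) = u ⟨0, by omega⟩ := rfl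
@[simp] private lemma d2q9cvm6_2 {α : Type*} (x : α) (u : Fin 5 → α) (h : 2 < 6) : Matrix.vecCons x u (⟨2, h⟩ : Fin 6) = u ⟨1, by omega⟩ := rfl
@[simp] private lemma d2q9cvm6_3 {α : Type*} (x : α) (u : Fin 5 → α) (h : 3 < 6) : Matrix.vecCons x u (⟨3, h⟩ : Fin 6) = u ⟨2, by omega⟩ := rfl
@[simp] private lemma d2q9cvm6_4 {α : Type*} (x : α) (u : Fin 5 → α) (h : 4 < 6) : Matrix.vecCons x u (⟨4, h⟩ : Fin 6) = u ⟨3, by omega⟩ := rfl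
@[simp] private lemma d2q9cvm6_5 {α : Type*} (x : α) (u : Fin 5 → α) (h : 5 < 6) : Matrix.vecCons x u (⟨5, h⟩ : Fin 6) = u ⟨4, by omega⟩ := rfl
@[simp] private lemma d2q9cvm5_0 {α : Type*} (x : α) (u : Fin 4 → α) (h : 0 < 5) : Matrix.vecCons x u (⟨0, h⟩ : Fin 5) = x := rfl
@[simp] private lemma d2q9cvm5_1 {α : Type*} (x : α) (u : Fin 4 → α) (h : 1 < 5) : Matrix.vecCons x u (⟨1, h⟩ : Fin 5) = u ⟨0, by omega⟩ := rfl
@[simp] private lemma d2q9cvm5_2 {α : Type*} (x : α) (u : Fin 4 → α) (h : 2 < 5) : Matrix.vecCons x u (⟨2, h⟩ : Fin 5) = u ⟨1, by omega⟩ := rfl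
@[simp] private lemma d2q9cvm5_3 {α : Type*} (x : α) (u : Fin 4 → α) (h : 3 < 5) : Matrix.vecCons x u (⟨3, h⟩ : Fin 5) = u ⟨2, by omega⟩ := rfl
@[simp] private lemma d2q9cvm5_4 {α : Type*} (x : α) (u : Fin 4 → α) (h : 4 < 5) : Matrix.vecCons x u (⟨4, h⟩ : Fin 5) = u ⟨3, by omega⟩ := rfl
@[simp] private lemma d2q9cvm4_0 {α : Type*} (x : α) (u : Fin 3 → α) (h : 0 < 4) : Matrix.vecCons x u (⟨0, h⟩ : Fin 4) = x := rfl
@[simp] private lemma d2q9cvm4_1 {α : Type*} (x : α) (u : Fin 3 → α) (h : 1 < 4) : Matrix.vecCons x u (⟨1, h⟩ : Fin 4) = u ⟨0, by omega⟩ := rfl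
@[simp] private lemma d2q9cvm4_2 {α : Type*} (x : α) (u : Fin 3 → α) (h : 2 < 4) : Matrix.vecCons x u (⟨2, h⟩ : Fin 4) = u ⟨1, by omega⟩ := rfl
@[simp] private lemma d2q9cvm4_3 {α : Type*} (x : α) (u : Fin 3 → α) (h : 3 < 4) : Matrix.vecCons x u (⟨3, h⟩ : Fin 4) = u ⟨2, by omega⟩ := rfl
@[simp] private lemma d2q9cvm3_0 {α : Type*} (x : α) (u : Fin 2 → α) (h : 0 < 3) : Matrix.vecCons x u (⟨0, h⟩ : Fin 3) = x := rfl
@[simp] private lemma d2q9cvm3_1 {α : Type*} (x : α) (u : Fin 2 → α) (h : 1 < 3) : Matrix.vecCons x u (⟨1, h⟩ : Fin 3) = u ⟨0, by omega⟩ := rfl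
@[simp] private lemma d2q9cvm3_2 {α : Type*} (x : α) (u : Fin 2 → α) (h : 2 < 3) : Matrix.vecCons x u (⟨2, h⟩ : Fin 3) = u ⟨1, by omega⟩ := rfl
@[simp] private lemma d2q9cvm2_0 {α : Type*} (x : α) (u : Fin 1 → α) (h : 0 < 2) : Matrix.vecCons x u (⟨0, h⟩ : Fin 2) = x := rfl
@[simp] private lemma d2q9cvm2_1 {α : Type*} (x : α) (u : Fin 1 → α) (h : 1 < 2) : Matrix.vecCons x u (⟨1, h⟩ : Fin 2) = u ⟨0, by omega⟩ := rfl

/-- Explicit inverse of `M(0)`. -/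
def d2q9B (l : ℝ) : Matrix (Fin 9) (Fin 9) ℝ := Matrix.of
 ![![1/9, 0, 0, -1/9, 0, 0, 0, 0, 1/9],
   ![1/9, 1/(6*l), 0, -1/36, 1/4, 0, -1/6, 0, -1/18],
   ![1/9, 0, 1/(6*l), -1/36, -1/4, 0, 0, -1/6, -1/18],
   ![1/9, -1/(6*l), 0, -1/36, 1/4, 0, 1/6, 0, -1/18],
   ![1/9, 0, -1/(6*l), -1/36, -1/4, 0, 0, 1/6, -1/18],
   ![1/9, 1/(6*l), 1/(6*l), 1/18, 0, 1/4, 1/12, 1/12, 1/36],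
   ![1/9, -1/(6*l), 1/(6*l), 1/18, 0, -1/4, -1/12, 1/12, 1/36],
   ![1/9, -1/(6*l), -1/(6*l), 1/18, 0, 1/4, -1/12, -1/12, 1/36],
   ![1/9, 1/(6*l), -1/(6*l), 1/18, 0, -1/4, 1/12, -1/12, 1/36]]

set_option maxHeartbeats 4000000

private lemma d2q9M_mul_B (l : ℝ) (hl : l ≠ 0) : d2q9M l 0 * d2q9B l = 1 := by
  ext i j
  fin_cases i <;> fin_cases j <;>
    (simp [d2q9M, d2q9B, d2q9V, d2q9P, Matrix.mul_apply, Fin.sum_univ_succ, Matrix.one_apply]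
      <;> field_simp <;> ring)

private lemma d2q9M0_inv (l : ℝ) (hl : l ≠ 0) : (d2q9M l 0)⁻¹ = d2q9B l :=
  inv_eq_right_inv (d2q9M_mul_B l hl)

private lemma d2q9deg_mono : ∀ i j : Fin 9, i < j → d2q9deg i ≤ d2q9deg j := by decide

set_option maxHeartbeats 4000000

/-- `T(ũ)` is lower block-triangular with identity diagonal blocks for the
grouping of moments by polynomial degree; in particular `det T(ũ) = 1`. -/
theorem d2q9T_block_triangular (l : ℝ) (hl : 0 < l) (u : ℝ × ℝ) :
    (∀ k m : Fin 9, d2q9deg k < d2q9deg m → d2q9T l u k m = 0) ∧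
    (∀ k m : Fin 9, d2q9deg k = d2q9deg m → d2q9T l u k m = if k = m then 1 else 0) ∧
    (d2q9T l u).det = 1 := by
  have hl' : l ≠ 0 := hl.ne'
  have hT : d2q9T l u = d2q9M l u * d2q9B l := by
    rw [d2q9T, d2q9M0_inv l hl']
  have h1 : ∀ k m : Fin 9, d2q9deg k < d2q9deg m → d2q9T l u k m = 0 := by
    intro k m hkm
    rw [hT]
    fin_cases k <;> fin_cases m <;>
      first
        | exact absurd hkm (by decide)
        | (simp [d2q9M, d2q9B, d2q9V, d2q9P, Matrix.mul_apply, Fin.sum_univ_succ]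
            <;> field_simp <;> ring)
  have h2 : ∀ k m : Fin 9, d2q9deg k = d2q9deg m →
      d2q9T l u k m = if k = m then 1 else 0 := by
    intro k m hkm
    rw [hT]
    fin_cases k <;> fin_cases m <;>
      first
        | exact absurd hkm (by decide)
        | (simp [d2q9M, d2q9B, d2q9V, d2q9P, Matrix.mul_apply, Fin.sum_univ_succ]
            <;> field_simp <;> ring)
  refine ⟨h1, h2, ?_⟩
  have htri : (d2q9T l u).BlockTriangular (OrderDual.toDual : Fin 9 → (Fin 9)ᵒᵈ) := by
    intro i j hij
    have hij' : i < j := hij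
    rcases lt_or_eq_of_le (d2q9deg_mono i j hij') with h | h
    · exact h1 i j h
    · rw [h2 i j h, if_neg hij'.ne]
  rw [Matrix.det_of_lowerTriangular _ htri]
  exact Finset.prod_eq_one fun i _ => by rw [h2 i i rfl, if_pos rfl]
end
end

section
/- Under the hypotheses of the momentum velocity tensor setup (P₀ = 1, P_α = X_α for 1 ≤ α ≤ d, X_α X_β = Σ_l a_l^{αβ} P_l with a_l^{αβ} = 0 whenever deg P_l > 2), one has Λ_l^{αβ}(ũ) = 0 for every ũ ∈ ℝ^d and every index l with deg P_l ≥ 3. -/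
open Matrix MvPolynomial

/-- if `X_α X_β = Σ_l a_l P_l` with `a_l = 0` whenever `deg P_l > 2`, then the
momentum velocity tensor satisfies `Λ_l^{αβ}(ũ) = 0` for every `ũ` and every index `l`
whose moment polynomial has degree at least 3. -/
theorem momentum_velocity_tensor_vanishes_high_degree {q d : ℕ}
    (v : Fin q → Fin d → ℝ) (P : Fin q → MvPolynomial (Fin d) ℝ)
    (i0 : Fin q) (ι : Fin d → Fin q)
    (hP0 : P i0 = 1) (hPι : ∀ α : Fin d, P (ι α) = X α)
    (cα cβ : Fin d) (a : Fin q → ℝ)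
    (ha : ∀ x : Fin d → ℝ, x cα * x cβ = ∑ l, a l * eval x (P l))
    (hadeg : ∀ l, 2 < (P l).totalDegree → a l = 0)
    (u : Fin d → ℝ)
    (M : Matrix (Fin q) (Fin q) ℝ)
    (hMdef : ∀ k j, M k j = eval (fun i => v j i - u i) (P k))
    (hM : IsUnit M)
    (Λ : Fin q → ℝ)
    (hΛ : ∀ p, v p cα * v p cβ = ∑ n, Λ n * M n p) :
    ∀ l, 3 ≤ (P l).totalDegree → Λ l = 0 := by
  set Λ' : Fin q → ℝ := fun n =>
    a n + u cα * (if n = ι cβ then 1 else 0) + u cβ * (if n = ι cα then 1 else 0)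
      + u cα * u cβ * (if n = i0 then 1 else 0) with hΛ'def
  have hM' : ∀ p, ∑ n, Λ' n * M n p = v p cα * v p cβ := by
    intro p
    have hsum : ∑ n, Λ' n * M n p
        = (∑ n, a n * M n p) + u cα * M (ι cβ) p + u cβ * M (ι cα) p
          + u cα * u cβ * M i0 p := by
      simp only [hΛ'def, add_mul, Finset.sum_add_distrib, mul_assoc, ite_mul, one_mul,
        zero_mul, mul_ite, mul_zero]
      simp
    have hMi0 : M i0 p = 1 := by rw [hMdef, hP0]; simp
    have hMια : ∀ γ : Fin d, M (ι γ) p = v p γ - u γ := by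
      intro γ; rw [hMdef, hPι]; simp
    have hsa : ∑ n, a n * M n p = (v p cα - u cα) * (v p cβ - u cβ) := by
      have := ha (fun i => v p i - u i)
      simp only [hMdef]
      exact this.symm
    rw [hsum, hsa, hMi0, hMια, hMια]; ring
  have hΛeq : Λ = Λ' := by
    have hdet : IsUnit M.det := (Matrix.isUnit_iff_isUnit_det M).mp hM
    have hvec : Λ ᵥ* M = Λ' ᵥ* M := by
      funext p
      have h1 : (Λ ᵥ* M) p = ∑ n, Λ n * M n p := rfl
      have h2 : (Λ' ᵥ* M) p = ∑ n, Λ' n * M n p := rfl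
      rw [h1, h2, ← hΛ p, hM' p]
    have := congrArg (fun w => w ᵥ* M⁻¹) hvec
    simpa [Matrix.vecMul_vecMul, Matrix.mul_nonsing_inv M hdet] using this
  intro l hl
  have hne0 : l ≠ i0 := by
    intro h; rw [h, hP0] at hl; simp at hl
  have hneα : l ≠ ι cα := by
    intro h; rw [h, hPι] at hl; rw [totalDegree_X] at hl; omega
  have hneβ : l ≠ ι cβ := by
    intro h; rw [h, hPι] at hl; rw [totalDegree_X] at hl; omega
  have hal : a l = 0 := hadeg l (by omega)
  rw [hΛeq]
  simp [hΛ'def, hal, hne0, hneα, hneβ]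
end
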